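/- There exist no three-player impartial games X and Y such that X is an O-game, Y is an N-game, and X + Y is an O-game. -/
import Mathlib


/-- Three-player impartial games: well-founded game trees. -/
inductive G3 : Type 1 where
  | mk : (ι : Type) → (ι → G3) → G3

namespace G3

/-- The index type of options (moves) of a game. -/
def moves : G3 → Type
  | mk ι _ => ι

/-- The option of a game corresponding to a move. -/
def moveFn : (g : G3) → moves g → G3
  | mk _ f => f

/-- Disjunctive sum: move in exactly one component. -/
noncomputable def add : G3 → G3 → G3 :=
  G3.rec (fun ι f ihf =>
    G3.rec (fun κ g ihg =>
      mk (ι ⊕ κ) (fun x =>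
        match x with
        | Sum.inl i => ihf i (mk κ g)
        | Sum.inr j => ihg j)))

/-- The four outcome types of a three-player impartial game. -/
inductive PType : Type
  | N | O | P | Q
deriving DecidableEq

open Classical in
/-- The type of a game: `N` iff some option is a `P`-game; `O` iff it has at least
one option and all options are `N`-games; `P` iff all options are `O`-games;
`Q` otherwise. -/
noncomputable def typ : G3 → PType
  | mk ι f =>
    if ∃ i, typ (f i) = PType.P then PType.N
    else if Nonempty ι ∧ ∀ i, typ (f i) = PType.N then PType.O
    else if ∀ i, typ (f i) = PType.O then PType.P
    else PType.Q

/-- The Nim heap of size `n`: options are heaps of sizes `0, …, n-1`. -/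
def nim : ℕ → G3
  | n => mk (Fin n) (fun i => nim i)
termination_by n => n
decreasing_by exact i.isLt

/-- The sum of `n` Nim heaps of size 1. -/
noncomputable def ones : ℕ → G3
  | 0 => nim 0
  | n + 1 => add (ones n) (nim 1)

lemma add_mk (ι κ : Type) (f : ι → G3) (g : κ → G3) :
    add (mk ι f) (mk κ g) = mk (ι ⊕ κ) (fun x =>
      match x with
      | Sum.inl i => add (f i) (mk κ g)
      | Sum.inr j => add (mk ι f) (g j)) := rfl

lemma typ_N_iff (ι : Type) (f : ι → G3) :
    typ (mk ι f) = PType.N ↔ ∃ i, typ (f i) = PType.P := by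
  rw [typ]
  split_ifs with h1 h2 h3
  · exact iff_of_true rfl h1
  · exact iff_of_false (by simp) h1
  · exact iff_of_false (by simp) h1
  · exact iff_of_false (by simp) h1

lemma typ_O_iff (ι : Type) (f : ι → G3) :
    typ (mk ι f) = PType.O ↔ Nonempty ι ∧ ∀ i, typ (f i) = PType.N := by
  rw [typ]
  split_ifs with h1 h2 h3
  · obtain ⟨i, hi⟩ := h1
    refine iff_of_false (by simp) ?_
    rintro ⟨-, hN⟩
    rw [hN i] at hi
    cases hi
  · exact iff_of_true rfl h2
  · exact iff_of_false (by simp) h2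
  · exact iff_of_false (by simp) h2

lemma typ_P_iff (ι : Type) (f : ι → G3) :
    typ (mk ι f) = PType.P ↔ ∀ i, typ (f i) = PType.O := by
  rw [typ]
  split_ifs with h1 h2 h3
  · obtain ⟨i, hi⟩ := h1
    refine iff_of_false (by simp) ?_
    intro hO
    rw [hO i] at hi
    cases hi
  · obtain ⟨⟨i⟩, hN⟩ := h2
    refine iff_of_false (by simp) ?_
    intro hO
    have := hN i
    rw [hO i] at this
    cases this
  · exact iff_of_true rfl h3
  · exact iff_of_false (by simp) h3

/-- Eight impossible type combinations for a disjunctive sum. -/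
def Claims (X Y : G3) : Prop :=
  (¬ (typ X = PType.O ∧ typ Y = PType.N ∧ typ (add X Y) = PType.O)) ∧
  (¬ (typ X = PType.N ∧ typ Y = PType.O ∧ typ (add X Y) = PType.O)) ∧
  (¬ (typ X = PType.O ∧ typ Y = PType.P ∧ typ (add X Y) = PType.N)) ∧
  (¬ (typ X = PType.P ∧ typ Y = PType.O ∧ typ (add X Y) = PType.N)) ∧
  (¬ (typ X = PType.N ∧ typ Y = PType.P ∧ typ (add X Y) = PType.P)) ∧
  (¬ (typ X = PType.P ∧ typ Y = PType.N ∧ typ (add X Y) = PType.P)) ∧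
  (¬ (typ X = PType.O ∧ typ Y = PType.O ∧ typ (add X Y) = PType.P)) ∧
  (¬ (typ X = PType.P ∧ typ Y = PType.P ∧ typ (add X Y) = PType.O))

theorem claims : ∀ X Y : G3, Claims X Y := by
  intro X
  induction X with
  | mk ι f ihf =>
    intro Y
    induction Y with
    | mk κ g ihg =>
      refine ⟨?_, ?_, ?_, ?_, ?_, ?_, ?_, ?_⟩
      -- C1 : O + N = O
      · rintro ⟨hX, hY, hS⟩
        obtain ⟨j, hj⟩ := (typ_N_iff κ g).mp hY
        rw [add_mk, typ_O_iff] at hS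
        exact (ihg j).2.2.1 ⟨hX, hj, hS.2 (Sum.inr j)⟩
      -- C1' : N + O = O
      · rintro ⟨hX, hY, hS⟩
        obtain ⟨i, hi⟩ := (typ_N_iff ι f).mp hX
        rw [add_mk, typ_O_iff] at hS
        exact (ihf i (mk κ g)).2.2.2.1 ⟨hi, hY, hS.2 (Sum.inl i)⟩
      -- C2 : O + P = N
      · rintro ⟨hX, hY, hS⟩
        rw [add_mk, typ_N_iff] at hS
        obtain ⟨x, hx⟩ := hS
        match x with
        | Sum.inl i =>
          exact (ihf i (mk κ g)).2.2.2.2.1 ⟨((typ_O_iff ι f).mp hX).2 i, hY, hx⟩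
        | Sum.inr j =>
          exact (ihg j).2.2.2.2.2.2.1 ⟨hX, (typ_P_iff κ g).mp hY j, hx⟩
      -- C2' : P + O = N
      · rintro ⟨hX, hY, hS⟩
        rw [add_mk, typ_N_iff] at hS
        obtain ⟨x, hx⟩ := hS
        match x with
        | Sum.inl i =>
          exact (ihf i (mk κ g)).2.2.2.2.2.2.1 ⟨(typ_P_iff ι f).mp hX i, hY, hx⟩
        | Sum.inr j =>
          exact (ihg j).2.2.2.2.2.1 ⟨hX, ((typ_O_iff κ g).mp hY).2 j, hx⟩
      -- C3 : N + P = P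
      · rintro ⟨hX, hY, hS⟩
        obtain ⟨i, hi⟩ := (typ_N_iff ι f).mp hX
        rw [add_mk, typ_P_iff] at hS
        exact (ihf i (mk κ g)).2.2.2.2.2.2.2 ⟨hi, hY, hS (Sum.inl i)⟩
      -- C3' : P + N = P
      · rintro ⟨hX, hY, hS⟩
        obtain ⟨j, hj⟩ := (typ_N_iff κ g).mp hY
        rw [add_mk, typ_P_iff] at hS
        exact (ihg j).2.2.2.2.2.2.2 ⟨hX, hj, hS (Sum.inr j)⟩
      -- C4 : O + O = P
      · rintro ⟨hX, hY, hS⟩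
        obtain ⟨⟨i⟩, hN⟩ := (typ_O_iff ι f).mp hX
        rw [add_mk, typ_P_iff] at hS
        exact (ihf i (mk κ g)).2.1 ⟨hN i, hY, hS (Sum.inl i)⟩
      -- C5 : P + P = O
      · rintro ⟨hX, hY, hS⟩
        rw [add_mk, typ_O_iff] at hS
        obtain ⟨⟨x⟩, hN⟩ := hS
        match x with
        | Sum.inl i =>
          exact (ihf i (mk κ g)).2.2.1 ⟨(typ_P_iff ι f).mp hX i, hY, hN (Sum.inl i)⟩
        | Sum.inr j =>
          exact (ihg j).2.2.2.1 ⟨hX, (typ_P_iff κ g).mp hY j, hN (Sum.inr j)⟩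

theorem no_O_plus_N_eq_O :
    ¬ ∃ X Y : G3, typ X = PType.O ∧ typ Y = PType.N ∧ typ (add X Y) = PType.O := by
  rintro ⟨X, Y, h⟩
  exact (claims X Y).1 h

end G3
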